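/- Beta-soundness of the subtyping preorders: (1) if τ is not equivalent to ωT and ⋀_{i∈I}(δi→τi) ≤D δ→τ, then there is a nonempty J ⊆ I with δ ≤D ⋀_{j∈J} δj and ⋀_{j∈J} τj ≤T τ, and conversely; (2) if κ is not equivalent to ωC and ⋀_{i∈I}(σi→κi) ≤T σ→κ, then there is a nonempty J ⊆ I with σ ≤S ⋀_{j∈J} σj and ⋀_{j∈J} κj ≤C κ, and conversely. -/

import Mathlib

open Classical

/-- Locations -/
abbrev Loc := ℕ

/-! ### Syntax of λimp (de Bruijn indices) -/

mutual
inductive Val : Type where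
  | var : ℕ → Val
  | lam : Comp → Val
inductive Comp : Type where
  | ret  : Val → Comp                     -- unit V
  | bind : Comp → Val → Comp              -- M ⋆ V
  | get  : Loc → Comp → Comp              -- get_ℓ(λ.M)
  | set  : Loc → Val → Comp → Comp        -- set_ℓ(V, M)
end

/-! ### Store and lookup terms -/

mutual
inductive Store : Type where
  | emp : Store
  | upd : Loc → Lkp → Store → Store       -- set_ℓ(u, s)
inductive Lkp : Type where
  | val : Val → Lkp
  | lkp : Loc → Store → Lkp               -- get_ℓ(s)
end

def Store.dom : Store → Finset Loc
  | .emp => ∅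
  | .upd ℓ _ s => insert ℓ s.dom

/-- s ∖ ℓ -/
def Store.erase (ℓ : Loc) : Store → Store
  | .emp => .emp
  | .upd ℓ' u s => if ℓ' = ℓ then s.erase ℓ else .upd ℓ' u (s.erase ℓ)

/-! ### The equational store theory -/

mutual
/-- ⊢ s = t -/
inductive StEq : Store → Store → Prop where
  | refl (s) : StEq s s
  | symm : StEq s t → StEq t s
  | trans : StEq s t → StEq t r → StEq s r
  | congr : LkEq u u' → StEq s s' → StEq (.upd ℓ u s) (.upd ℓ u' s')
  | setGet (h : ℓ ∈ s.dom) : StEq (.upd ℓ (.lkp ℓ s) s) s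
  | overwrite : StEq (.upd ℓ u (.upd ℓ w s)) (.upd ℓ u s)
  | commute (h : ℓ ≠ ℓ') :
      StEq (.upd ℓ u (.upd ℓ' w s)) (.upd ℓ' w (.upd ℓ u s))
/-- ⊢ u = u' -/
inductive LkEq : Lkp → Lkp → Prop where
  | refl (u) : LkEq u u
  | symm : LkEq u v → LkEq v u
  | trans : LkEq u v → LkEq v w → LkEq u w
  | congr (ℓ) (h : ℓ ∈ s.dom) : StEq s s' → LkEq (.lkp ℓ s) (.lkp ℓ s')
  | getSet : LkEq (.lkp ℓ (.upd ℓ u s)) u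
  | getSetNe (h : ℓ ≠ ℓ') : LkEq (.lkp ℓ (.upd ℓ' u s)) (.lkp ℓ s)
end

/-- Extensional equivalence s ≃ t of store terms. -/
def StExtEq (s t : Store) : Prop :=
  s.dom = t.dom ∧ ∀ ℓ ∈ s.dom, LkEq (.lkp ℓ s) (.lkp ℓ t)

/-! ### Normal forms of stores -/

def Store.size : Store → ℕ
  | .emp => 0
  | .upd _ _ s => s.size + 1

theorem Store.erase_size (ℓ : Loc) : (s : Store) → (s.erase ℓ).size ≤ s.size
  | .emp => le_refl _
  | .upd ℓ' u s => by
      unfold Store.erase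
      by_cases h : ℓ' = ℓ
      · simpa [h, Store.size] using le_trans (Store.erase_size ℓ s) (Nat.le_succ _)
      · simpa [h, Store.size] using Nat.succ_le_succ (Store.erase_size ℓ s)

def Store.nf : Store → Store
  | .emp => .emp
  | .upd ℓ u s => .upd ℓ u ((s.erase ℓ).nf)
termination_by s => s.size
decreasing_by
  simp only [Store.size]
  exact Nat.lt_succ_of_le (Store.erase_size ℓ s)

/-! ### Closedness -/

mutual
def Val.ClosedUnder : ℕ → Val → Prop
  | k, .var n => n < k
  | k, .lam M => Comp.ClosedUnder (k+1) M
def Comp.ClosedUnder : ℕ → Comp → Prop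
  | k, .ret V => Val.ClosedUnder k V
  | k, .bind M V => Comp.ClosedUnder k M ∧ Val.ClosedUnder k V
  | k, .get _ M => Comp.ClosedUnder (k+1) M
  | k, .set _ V M => Val.ClosedUnder k V ∧ Comp.ClosedUnder k M
end

mutual
def Store.Closed : Store → Prop
  | .emp => True
  | .upd _ u s => u.Closed ∧ s.Closed
def Lkp.Closed : Lkp → Prop
  | .val V => Val.ClosedUnder 0 V
  | .lkp _ s => s.Closed
end

/-! ### Substitution -/

mutual
def Val.shiftAux (c : ℕ) : Val → Val
  | .var n => if n < c then .var n else .var (n+1)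
  | .lam M => .lam (Comp.shiftAux (c+1) M)
def Comp.shiftAux (c : ℕ) : Comp → Comp
  | .ret V => .ret (V.shiftAux c)
  | .bind M V => .bind (M.shiftAux c) (V.shiftAux c)
  | .get ℓ M => .get ℓ (M.shiftAux (c+1))
  | .set ℓ V M => .set ℓ (V.shiftAux c) (M.shiftAux c)
end

mutual
/-- capture-avoiding substitution of `W` for the variable `k` in a value -/
def Val.substV (k : ℕ) (W : Val) : Val → Val
  | .var n => if n = k then W else if k < n then .var (n-1) else .var n
  | .lam M => .lam (Comp.substC (k+1) (Val.shiftAux 0 W) M)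
/-- capture-avoiding substitution of `W` for the variable `k` in a computation: M[W/k] -/
def Comp.substC (k : ℕ) (W : Val) : Comp → Comp
  | .ret V => .ret (Val.substV k W V)
  | .bind M V => .bind (Comp.substC k W M) (Val.substV k W V)
  | .get ℓ M => .get ℓ (Comp.substC (k+1) (Val.shiftAux 0 W) M)
  | .set ℓ V M => .set ℓ (Val.substV k W V) (Comp.substC k W M)
end

/-- simultaneous substitution of closed values for the free variables 0,…,n-1 -/
def msubst (Vs : List Val) (M : Comp) : Comp :=
  Vs.foldl (fun acc V => Comp.substC 0 V acc) M

/-! ### Small-step reduction on configurations -/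

inductive Red : Comp × Store → Comp × Store → Prop where
  | beta : Red (.bind (.ret V) (.lam M), s) (Comp.substC 0 V M, s)
  | bindl : Red (M, s) (N, t) → Red (.bind M V, s) (.bind N V, t)
  | get : LkEq (.lkp ℓ s) (.val V) → Red (.get ℓ M, s) (Comp.substC 0 V M, s)
  | set : Red (.set ℓ V M, s) (M, .upd ℓ (.val V) s)

/-- reflexive-transitive closure →* -/
def RedStar : Comp × Store → Comp × Store → Prop := Relation.ReflTransGen Red

/-! ### Big-step convergence -/

inductive BigStep : Comp → Store → Val → Store → Prop where
  | ret : BigStep (.ret V) s V s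
  | bind : BigStep M s V s' → BigStep (Comp.substC 0 V N) s' W t →
      BigStep (.bind M (.lam N)) s W t
  | get : LkEq (.lkp ℓ s) (.val V) → BigStep (Comp.substC 0 V M) s W t →
      BigStep (.get ℓ M) s W t
  | set : BigStep M (.upd ℓ (.val V) s) W t → BigStep (.set ℓ V M) s W t

/-- the partial function M(s): the result (V,t) if (M,s) ⇓ (V,t), and ⊥ (i.e. `none`) otherwise -/
noncomputable def run (M : Comp) (s : Store) : Option (Val × Store) :=
  if h : ∃ p : Val × Store, BigStep M s p.1 p.2 then some h.choose else none

/-! ### Intersection types of the four sorts -/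

mutual
/-- value types δ -/
inductive TyD : Type where
  | arrow : TyD → TyT → TyD
  | inter : TyD → TyD → TyD
  | omega : TyD
/-- store types σ -/
inductive TyS : Type where
  | loc : Loc → TyD → TyS
  | inter : TyS → TyS → TyS
  | omega : TyS
/-- result types κ -/
inductive TyC : Type where
  | prod : TyD → TyS → TyC
  | inter : TyC → TyC → TyC
  | omega : TyC
/-- computation types τ -/
inductive TyT : Type where
  | arrow : TyS → TyC → TyT
  | inter : TyT → TyT → TyT
  | omega : TyT
end

def TyS.domS : TyS → Finset Loc
  | .loc ℓ _ => {ℓ}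
  | .inter σ σ' => σ.domS ∪ σ'.domS
  | .omega => ∅

/-! ### Subtyping -/

mutual
inductive SubD : TyD → TyD → Prop where
  | refl (δ) : SubD δ δ
  | trans : SubD δ₁ δ₂ → SubD δ₂ δ₃ → SubD δ₁ δ₃
  | leOmega (δ) : SubD δ .omega
  | interLeft : SubD (TyD.inter δ δ') δ
  | interRight : SubD (TyD.inter δ δ') δ'
  | interGlb : SubD δ δ₁ → SubD δ δ₂ → SubD δ (TyD.inter δ₁ δ₂)
  | interMono : SubD δ₁ δ₁' → SubD δ₂ δ₂' → SubD (TyD.inter δ₁ δ₂) (TyD.inter δ₁' δ₂')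
  | omegaArrow : SubD .omega (.arrow .omega .omega)
  | arrowInter : SubD ((TyD.arrow δ τ).inter (.arrow δ τ')) (TyD.arrow δ (TyT.inter τ τ'))
  | arrowMono : SubD δ' δ → SubT τ τ' → SubD (.arrow δ τ) (.arrow δ' τ')
inductive SubS : TyS → TyS → Prop where
  | refl (σ) : SubS σ σ
  | trans : SubS σ₁ σ₂ → SubS σ₂ σ₃ → SubS σ₁ σ₃
  | leOmega (σ) : SubS σ .omega
  | interLeft : SubS (TyS.inter σ σ') σ
  | interRight : SubS (TyS.inter σ σ') σ'
  | interGlb : SubS σ σ₁ → SubS σ σ₂ → SubS σ (TyS.inter σ₁ σ₂)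
  | interMono : SubS σ₁ σ₁' → SubS σ₂ σ₂' → SubS (TyS.inter σ₁ σ₂) (TyS.inter σ₁' σ₂')
  | locInter : SubS ((TyS.loc ℓ δ).inter (.loc ℓ δ')) (TyS.loc ℓ (TyD.inter δ δ'))
  | locMono : SubD δ δ' → SubS (.loc ℓ δ) (.loc ℓ δ')
inductive SubC : TyC → TyC → Prop where
  | refl (κ) : SubC κ κ
  | trans : SubC κ₁ κ₂ → SubC κ₂ κ₃ → SubC κ₁ κ₃
  | leOmega (κ) : SubC κ .omega
  | interLeft : SubC (TyC.inter κ κ') κ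
  | interRight : SubC (TyC.inter κ κ') κ'
  | interGlb : SubC κ κ₁ → SubC κ κ₂ → SubC κ (TyC.inter κ₁ κ₂)
  | interMono : SubC κ₁ κ₁' → SubC κ₂ κ₂' → SubC (TyC.inter κ₁ κ₂) (TyC.inter κ₁' κ₂')
  | omegaProd : SubC .omega (.prod .omega .omega)
  | prodInter : SubC ((TyC.prod δ σ).inter (.prod δ' σ')) (TyC.prod (TyD.inter δ δ') (TyS.inter σ σ'))
  | prodMono : SubD δ δ' → SubS σ σ' → SubC (.prod δ σ) (.prod δ' σ')
inductive SubT : TyT → TyT → Prop where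
  | refl (τ) : SubT τ τ
  | trans : SubT τ₁ τ₂ → SubT τ₂ τ₃ → SubT τ₁ τ₃
  | leOmega (τ) : SubT τ .omega
  | interLeft : SubT (TyT.inter τ τ') τ
  | interRight : SubT (TyT.inter τ τ') τ'
  | interGlb : SubT τ τ₁ → SubT τ τ₂ → SubT τ (TyT.inter τ₁ τ₂)
  | interMono : SubT τ₁ τ₁' → SubT τ₂ τ₂' → SubT (TyT.inter τ₁ τ₂) (TyT.inter τ₁' τ₂')
  | omegaArrow : SubT .omega (.arrow .omega .omega)
  | arrowInter : SubT ((TyT.arrow σ κ).inter (.arrow σ κ')) (TyT.arrow σ (TyC.inter κ κ'))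
  | arrowMono : SubS σ' σ → SubC κ κ' → SubT (.arrow σ κ) (.arrow σ' κ')
end

/-! ### Finite intersections -/

def InterD (l : List TyD) : TyD := l.foldr TyD.inter TyD.omega
def InterS (l : List TyS) : TyS := l.foldr TyS.inter TyS.omega
def InterC (l : List TyC) : TyC := l.foldr TyC.inter TyC.omega
def InterT (l : List TyT) : TyT := l.foldr TyT.inter TyT.omega

/-! ### Type assignment -/

/-- typing contexts (de Bruijn) -/
abbrev Ctx := List TyD

mutual
inductive TypV : Ctx → Val → TyD → Prop where
  | var : Γ[n]? = some δ → TypV Γ (.var n) δ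
  | lam : TypC (δ :: Γ) M τ → TypV Γ (.lam M) (.arrow δ τ)
  | omega : TypV Γ V .omega
  | inter : TypV Γ V δ → TypV Γ V δ' → TypV Γ V (TyD.inter δ δ')
  | sub : TypV Γ V δ → SubD δ δ' → TypV Γ V δ'
inductive TypC : Ctx → Comp → TyT → Prop where
  | ret : TypV Γ V δ → TypC Γ (.ret V) (.arrow σ (.prod δ σ))
  | bind : TypC Γ M (.arrow σ (.prod δ' σ')) →
      TypV Γ V (.arrow δ' (.arrow σ' (.prod δ'' σ''))) →
      TypC Γ (.bind M V) (.arrow σ (.prod δ'' σ''))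
  | get : TypC (δ :: Γ) M (.arrow σ κ) →
      TypC Γ (.get ℓ M) (.arrow ((TyS.loc ℓ δ).inter σ) κ)
  | set : TypV Γ V δ → TypC Γ M (.arrow ((TyS.loc ℓ δ).inter σ) κ) →
      ℓ ∉ σ.domS → TypC Γ (.set ℓ V M) (.arrow σ κ)
  | omega : TypC Γ M .omega
  | inter : TypC Γ M τ → TypC Γ M τ' → TypC Γ M (TyT.inter τ τ')
  | sub : TypC Γ M τ → SubT τ τ' → TypC Γ M τ'
end

mutual
inductive TypS : Ctx → Store → TyS → Prop where
  | updA : TypL Γ u δ → TypS Γ (.upd ℓ u s) (.loc ℓ δ)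
  | updB : TypS Γ s (.loc ℓ' δ) → ℓ ≠ ℓ' → TypS Γ (.upd ℓ u s) (.loc ℓ' δ)
  | omega : TypS Γ s .omega
  | inter : TypS Γ s σ → TypS Γ s σ' → TypS Γ s (TyS.inter σ σ')
  | sub : TypS Γ s σ → SubS σ σ' → TypS Γ s σ'
inductive TypL : Ctx → Lkp → TyD → Prop where
  | val : TypV Γ V δ → TypL Γ (.val V) δ
  | lkp : TypS Γ s (.loc ℓ δ) → TypL Γ (.lkp ℓ s) δ
  | omega : TypL Γ u .omega
  | inter : TypL Γ u δ → TypL Γ u δ' → TypL Γ u (TyD.inter δ δ')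
  | sub : TypL Γ u δ → SubD δ δ' → TypL Γ u δ'
end

inductive TypConf : Ctx → Comp → Store → TyC → Prop where
  | conf : TypC Γ M (.arrow σ κ) → TypS Γ s σ → TypConf Γ M s κ
  | omega : TypConf Γ M s .omega
  | inter : TypConf Γ M s κ → TypConf Γ M s κ' → TypConf Γ M s (TyC.inter κ κ')
  | sub : TypConf Γ M s κ → SubC κ κ' → TypConf Γ M s κ'

/-! ### Saturated sets -/

mutual
def SatD : TyD → Set Val
  | .omega => {V | Val.ClosedUnder 0 V}
  | .arrow δ τ =>
      {V | Val.ClosedUnder 0 V ∧ ∀ W ∈ SatD δ, Comp.bind (.ret W) V ∈ SatT τ}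
  | .inter δ δ' => SatD δ ∩ SatD δ'
def SatS : TyS → Set Store
  | .omega => {s | s.Closed}
  | .loc ℓ δ =>
      {s | s.Closed ∧ ℓ ∈ s.dom ∧ ∃ V ∈ SatD δ, LkEq (.lkp ℓ s) (.val V)}
  | .inter σ σ' => SatS σ ∩ SatS σ'
def SatC : TyC → Set (Option (Val × Store))
  | .omega => {r | ∀ V t, r = some (V, t) → Val.ClosedUnder 0 V ∧ Store.Closed t}
  | .prod δ σ => {r | ∃ V t, r = some (V, t) ∧ V ∈ SatD δ ∧ t ∈ SatS σ}
  | .inter κ κ' => SatC κ ∩ SatC κ'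
def SatT : TyT → Set Comp
  | .omega => {M | Comp.ClosedUnder 0 M}
  | .arrow σ κ => {M | Comp.ClosedUnder 0 M ∧ ∀ s ∈ SatS σ, run M s ∈ SatC κ}
  | .inter τ τ' => SatT τ ∩ SatT τ'
end

/-! A derivation of `a ≤ b` is tracked through the lists of arrow components of `a` and `b`:
every arrow `δ → τ` of `b` with `τ ≄ ω` is bounded below by the intersection of a nonempty
set of arrows of `a`, which is the statement of beta-soundness. All subtyping rules preserve this
invariant; for transitivity one first discards the arrows whose codomain is `≃ ω`, which is why
the side condition `τ ≄ ω` is needed. Only the meet-semilattice laws of the domain and codomain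
sorts enter the argument. -/

theorem exists_map_eq_of_forall_mem_range {ι γ : Type*} {f : ι → γ} :
    ∀ {J : List γ}, (∀ p ∈ J, p ∈ Set.range f) → ∃ I : List ι, I.map f = J
  | [], _ => ⟨[], rfl⟩
  | p :: J, h => by
    obtain ⟨i, rfl⟩ := h p List.mem_cons_self
    obtain ⟨I, rfl⟩ :=
      exists_map_eq_of_forall_mem_range fun q hq => h q (List.mem_cons_of_mem _ hq)
    exact ⟨i :: I, rfl⟩

structure InterPreorder (α : Type*) where
  le : α → α → Prop
  inter : α → α → α
  top : α
  refl (a : α) : le a a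
  trans {a b c : α} : le a b → le b c → le a c
  le_top (a : α) : le a top
  inter_le_left {a b : α} : le (inter a b) a
  inter_le_right {a b : α} : le (inter a b) b
  le_inter {a b c : α} : le a b → le a c → le a (inter b c)

namespace InterPreorder

variable {α β : Type*} (P : InterPreorder α) (Q : InterPreorder β)

def big (l : List α) : α := l.foldr P.inter P.top

/-- A pair `(a, b)` stands for the arrow `a → b`; it is covered by `arrs` when it lies above the
intersection of the arrows of some nonempty `J ⊆ arrs`. -/
def Covers (arrs : List (α × β)) (a : α) (b : β) : Prop :=
  ∃ J : List (α × β), J ≠ [] ∧ J ⊆ arrs ∧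
    P.le a (P.big (J.map Prod.fst)) ∧ Q.le (Q.big (J.map Prod.snd)) b

def CoversAll (arrs₁ arrs₂ : List (α × β)) : Prop :=
  ∀ p ∈ arrs₂, ¬ Q.le Q.top p.2 → Covers P Q arrs₁ p.1 p.2

variable {P Q}

theorem big_le_of_mem {l : List α} {x : α} (hx : x ∈ l) : P.le (P.big l) x := by
  induction l with
  | nil => cases hx
  | cons a l ih =>
    rcases List.mem_cons.mp hx with rfl | hx
    · exact P.inter_le_left
    · exact P.trans P.inter_le_right (ih hx)

theorem le_big {l : List α} {a : α} (h : ∀ x ∈ l, P.le a x) : P.le a (P.big l) := by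
  induction l with
  | nil => exact P.le_top a
  | cons b l ih =>
    exact P.le_inter (h b List.mem_cons_self) (ih fun x hx => h x (List.mem_cons_of_mem _ hx))

theorem big_le_big {l₁ l₂ : List α} (h : ∀ x ∈ l₂, x ∈ l₁ ∨ P.le P.top x) :
    P.le (P.big l₁) (P.big l₂) :=
  le_big fun x hx => (h x hx).elim big_le_of_mem (P.trans (P.le_top _))

theorem big_le_big_of_subset {l₁ l₂ : List α} (h : l₂ ⊆ l₁) : P.le (P.big l₁) (P.big l₂) :=
  big_le_big fun _ hx => .inl (h hx)

theorem covers_of_mem {arrs : List (α × β)} {a : α} {b : β} (h : (a, b) ∈ arrs) :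
    Covers P Q arrs a b :=
  ⟨[(a, b)], List.cons_ne_nil _ _, List.cons_subset.mpr ⟨h, List.nil_subset _⟩,
    P.le_inter (P.refl a) (P.le_top a), Q.inter_le_left⟩

theorem Covers.weaken {arrs : List (α × β)} {a a' : α} {b b' : β} (h : Covers P Q arrs a b)
    (ha : P.le a' a) (hb : Q.le b b') : Covers P Q arrs a' b' :=
  let ⟨J, hJ, hJarrs, hfst, hsnd⟩ := h
  ⟨J, hJ, hJarrs, P.trans ha hfst, Q.trans hsnd hb⟩

theorem Covers.of_forall_mem {arrs J : List (α × β)} (hJ : J ≠ [])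
    (h : ∀ p ∈ J, Covers P Q arrs p.1 p.2) :
    Covers P Q arrs (P.big (J.map Prod.fst)) (Q.big (J.map Prod.snd)) := by
  choose! K hK_ne hK_arrs hK_fst hK_snd using h
  have hK_sub {p} (hp : p ∈ J) : K p ⊆ J.flatMap K :=
    fun _ hq => List.mem_flatMap.mpr ⟨p, hp, hq⟩
  refine ⟨J.flatMap K, ?_, ?_, le_big ?_, ?_⟩
  · obtain ⟨p, hp⟩ := List.exists_mem_of_ne_nil J hJ
    exact fun he => hK_ne p hp (List.flatMap_eq_nil_iff.mp he p hp)
  · intro q hq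
    obtain ⟨p, hp, hq⟩ := List.mem_flatMap.mp hq
    exact hK_arrs p hp hq
  · intro x hx
    obtain ⟨q, hq, rfl⟩ := List.mem_map.mp hx
    obtain ⟨p, hp, hq⟩ := List.mem_flatMap.mp hq
    exact P.trans (big_le_of_mem (List.mem_map_of_mem hp))
      (P.trans (hK_fst p hp) (big_le_of_mem (List.mem_map_of_mem hq)))
  · refine le_big fun y hy => ?_
    obtain ⟨p, hp, rfl⟩ := List.mem_map.mp hy
    exact Q.trans (big_le_big_of_subset (List.map_subset _ (hK_sub hp))) (hK_snd p hp)

theorem CoversAll.of_subset {arrs₁ arrs₂ : List (α × β)} (h : arrs₂ ⊆ arrs₁) :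
    CoversAll P Q arrs₁ arrs₂ :=
  fun _ hp _ => covers_of_mem (h hp)

theorem CoversAll.append {arrs l₁ l₂ : List (α × β)} (h₁ : CoversAll P Q arrs l₁)
    (h₂ : CoversAll P Q arrs l₂) : CoversAll P Q arrs (l₁ ++ l₂) :=
  fun p hp => (List.mem_append.mp hp).elim (h₁ p) (h₂ p)

theorem CoversAll.trans {l₁ l₂ l₃ : List (α × β)} (h₁₂ : CoversAll P Q l₁ l₂)
    (h₂₃ : CoversAll P Q l₂ l₃) : CoversAll P Q l₁ l₃ := by
  classical
  intro p hp hp_top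
  obtain ⟨J, -, hJl₂, hfst, hsnd⟩ := h₂₃ p hp hp_top
  set Jn := J.filter fun q => ¬ Q.le Q.top q.2 with hJn_def
  have mem_Jn_iff {q} : q ∈ Jn ↔ q ∈ J ∧ ¬ Q.le Q.top q.2 := by
    rw [hJn_def, List.mem_filter, decide_eq_true_iff]
  have mem_Jn {q} (hq : q ∈ J) (hq_top : ¬ Q.le Q.top q.2) : q ∈ Jn :=
    mem_Jn_iff.mpr ⟨hq, hq_top⟩
  have hJn_le : Q.le (Q.big (Jn.map Prod.snd)) (Q.big (J.map Prod.snd)) := by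
    refine big_le_big fun y hy => ?_
    obtain ⟨q, hq, rfl⟩ := List.mem_map.mp hy
    by_cases hq_top : Q.le Q.top q.2
    · exact .inr hq_top
    · exact .inl (List.mem_map_of_mem (mem_Jn hq hq_top))
  have hJn : Jn ≠ [] := by
    intro he
    refine hp_top (Q.trans (le_big fun y hy => ?_) hsnd)
    obtain ⟨q, hq, rfl⟩ := List.mem_map.mp hy
    by_contra hq_top
    simpa [he] using mem_Jn hq hq_top
  have hcov : Covers P Q l₁ (P.big (Jn.map Prod.fst)) (Q.big (Jn.map Prod.snd)) :=
    Covers.of_forall_mem hJn fun q hq =>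
      h₁₂ q (hJl₂ (mem_Jn_iff.mp hq).1) (mem_Jn_iff.mp hq).2
  exact hcov.weaken
    (P.trans hfst (big_le_big_of_subset (List.map_subset _ (List.filter_subset_self J))))
    (Q.trans hJn_le hsnd)

theorem CoversAll.singleton_of_le {a a' : α} {b b' : β} (ha : P.le a' a) (hb : Q.le b b') :
    CoversAll P Q [(a, b)] [(a', b')] := by
  rintro p hp -
  obtain rfl := List.mem_singleton.mp hp
  exact (covers_of_mem (List.mem_singleton_self _)).weaken ha hb

theorem CoversAll.singleton_top (arrs : List (α × β)) (a : α) :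
    CoversAll P Q arrs [(a, Q.top)] := by
  rintro p hp hp_top
  obtain rfl := List.mem_singleton.mp hp
  exact absurd (Q.refl _) hp_top

theorem CoversAll.pair_inter (a : α) (b b' : β) :
    CoversAll P Q [(a, b), (a, b')] [(a, Q.inter b b')] := by
  rintro p hp -
  obtain rfl := List.mem_singleton.mp hp
  exact ⟨[(a, b), (a, b')], List.cons_ne_nil _ _, List.Subset.refl _,
    P.le_inter (P.refl a) (P.le_inter (P.refl a) (P.le_top a)),
    Q.le_inter Q.inter_le_left (Q.trans Q.inter_le_right Q.inter_le_left)⟩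

theorem covers_ofFn_iff {n : ℕ} (f : Fin n → α × β) (a : α) (b : β) :
    Covers P Q (List.ofFn f) a b ↔ ∃ J : List (Fin n), J ≠ [] ∧
      P.le a (P.big (J.map fun i => (f i).1)) ∧ Q.le (Q.big (J.map fun i => (f i).2)) b := by
  constructor
  · rintro ⟨K, hK, hKf, hfst, hsnd⟩
    obtain ⟨J, rfl⟩ := exists_map_eq_of_forall_mem_range fun p hp =>
      List.mem_ofFn.mp (hKf hp)
    rw [List.map_map] at hfst hsnd
    exact ⟨J, fun he => hK (by rw [he, List.map_nil]), hfst, hsnd⟩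
  · rintro ⟨J, hJ, hfst, hsnd⟩
    refine ⟨J.map f, mt List.map_eq_nil_iff.mp hJ, fun p hp => ?_, ?_, ?_⟩
    · obtain ⟨i, -, rfl⟩ := List.mem_map.mp hp
      exact List.mem_ofFn.mpr ⟨i, rfl⟩
    · rwa [List.map_map]
    · rwa [List.map_map]

end InterPreorder

open InterPreorder

def TyD.interPreorder : InterPreorder TyD where
  le := SubD
  inter := .inter
  top := .omega
  refl := .refl
  trans := .trans
  le_top := .leOmega
  inter_le_left := .interLeft
  inter_le_right := .interRight
  le_inter := .interGlb

def TyS.interPreorder : InterPreorder TyS where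
  le := SubS
  inter := .inter
  top := .omega
  refl := .refl
  trans := .trans
  le_top := .leOmega
  inter_le_left := .interLeft
  inter_le_right := .interRight
  le_inter := .interGlb

def TyC.interPreorder : InterPreorder TyC where
  le := SubC
  inter := .inter
  top := .omega
  refl := .refl
  trans := .trans
  le_top := .leOmega
  inter_le_left := .interLeft
  inter_le_right := .interRight
  le_inter := .interGlb

def TyT.interPreorder : InterPreorder TyT where
  le := SubT
  inter := .inter
  top := .omega
  refl := .refl
  trans := .trans
  le_top := .leOmega
  inter_le_left := .interLeft
  inter_le_right := .interRight
  le_inter := .interGlb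

def TyD.arrows : TyD → List (TyD × TyT)
  | .arrow δ τ => [(δ, τ)]
  | .inter a b => a.arrows ++ b.arrows
  | .omega => []

def TyT.arrows : TyT → List (TyS × TyC)
  | .arrow σ κ => [(σ, κ)]
  | .inter a b => a.arrows ++ b.arrows
  | .omega => []

theorem SubD.coversAll {a b : TyD} (h : SubD a b) :
    CoversAll TyD.interPreorder TyT.interPreorder a.arrows b.arrows := by
  induction h using SubD.rec (motive_2 := fun _ _ _ => True)
    (motive_3 := fun _ _ _ => True) (motive_4 := fun _ _ _ => True)
  all_goals try exact trivial
  case refl => exact .of_subset (List.Subset.refl _)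
  case trans ih₁ ih₂ => exact ih₁.trans ih₂
  case leOmega => exact .of_subset (List.nil_subset _)
  case interLeft => exact .of_subset (List.subset_append_left _ _)
  case interRight => exact .of_subset (List.subset_append_right _ _)
  case interGlb ih₁ ih₂ => exact ih₁.append ih₂
  case interMono ih₁ ih₂ =>
    exact ((CoversAll.of_subset (List.subset_append_left _ _)).trans ih₁).append
      ((CoversAll.of_subset (List.subset_append_right _ _)).trans ih₂)
  case omegaArrow => exact .singleton_top _ _
  case arrowInter => exact .pair_inter _ _ _
  case arrowMono hδ hτ _ _ => exact .singleton_of_le hδ hτ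

theorem SubT.coversAll {a b : TyT} (h : SubT a b) :
    CoversAll TyS.interPreorder TyC.interPreorder a.arrows b.arrows := by
  induction h using SubT.rec (motive_1 := fun _ _ _ => True)
    (motive_2 := fun _ _ _ => True) (motive_3 := fun _ _ _ => True)
  all_goals try exact trivial
  case refl => exact .of_subset (List.Subset.refl _)
  case trans ih₁ ih₂ => exact ih₁.trans ih₂
  case leOmega => exact .of_subset (List.nil_subset _)
  case interLeft => exact .of_subset (List.subset_append_left _ _)
  case interRight => exact .of_subset (List.subset_append_right _ _)
  case interGlb ih₁ ih₂ => exact ih₁.append ih₂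
  case interMono ih₁ ih₂ =>
    exact ((CoversAll.of_subset (List.subset_append_left _ _)).trans ih₁).append
      ((CoversAll.of_subset (List.subset_append_right _ _)).trans ih₂)
  case omegaArrow => exact .singleton_top _ _
  case arrowInter => exact .pair_inter _ _ _
  case arrowMono hσ hκ _ _ => exact .singleton_of_le hσ hκ

theorem TyD.arrows_interD_map_arrow (l : List (TyD × TyT)) :
    (InterD (l.map fun p => .arrow p.1 p.2)).arrows = l := by
  induction l with
  | nil => rfl
  | cons p l ih => exact congrArg (p :: ·) ih

theorem TyT.arrows_interT_map_arrow (l : List (TyS × TyC)) :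
    (InterT (l.map fun p => .arrow p.1 p.2)).arrows = l := by
  induction l with
  | nil => rfl
  | cons p l ih => exact congrArg (p :: ·) ih

theorem subD_interD_map_arrow : ∀ l : List (TyD × TyT), l ≠ [] →
    SubD (InterD (l.map fun p => .arrow p.1 p.2))
      (.arrow (InterD (l.map Prod.fst)) (InterT (l.map Prod.snd)))
  | [], h => absurd rfl h
  | [_], _ =>
    .trans .interLeft (.arrowMono .interLeft (.interGlb (.refl _) (.leOmega _)))
  | _ :: q :: l, _ =>
    .trans (.interMono (.refl _) (subD_interD_map_arrow (q :: l) (List.cons_ne_nil _ _)))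
      (.trans (.interMono (.arrowMono .interLeft (.refl _)) (.arrowMono .interRight (.refl _)))
        .arrowInter)

theorem subT_interT_map_arrow : ∀ l : List (TyS × TyC), l ≠ [] →
    SubT (InterT (l.map fun p => .arrow p.1 p.2))
      (.arrow (InterS (l.map Prod.fst)) (InterC (l.map Prod.snd)))
  | [], h => absurd rfl h
  | [_], _ =>
    .trans .interLeft (.arrowMono .interLeft (.interGlb (.refl _) (.leOmega _)))
  | _ :: q :: l, _ =>
    .trans (.interMono (.refl _) (subT_interT_map_arrow (q :: l) (List.cons_ne_nil _ _)))
      (.trans (.interMono (.arrowMono .interLeft (.refl _)) (.arrowMono .interRight (.refl _)))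
        .arrowInter)

theorem subD_interD_map_arrow_iff {l : List (TyD × TyT)} {δ : TyD} {τ : TyT}
    (hτ : ¬ SubT .omega τ) :
    SubD (InterD (l.map fun p => .arrow p.1 p.2)) (.arrow δ τ) ↔
      Covers TyD.interPreorder TyT.interPreorder l δ τ := by
  constructor
  · intro h
    have := h.coversAll (δ, τ) (List.mem_singleton_self _) hτ
    rwa [TyD.arrows_interD_map_arrow] at this
  · rintro ⟨J, hJ, hJl, hδ, hτ'⟩
    exact .trans (big_le_big_of_subset (P := TyD.interPreorder) (List.map_subset _ hJl))
      (.trans (subD_interD_map_arrow J hJ) (.arrowMono hδ hτ'))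

theorem subT_interT_map_arrow_iff {l : List (TyS × TyC)} {σ : TyS} {κ : TyC}
    (hκ : ¬ SubC .omega κ) :
    SubT (InterT (l.map fun p => .arrow p.1 p.2)) (.arrow σ κ) ↔
      Covers TyS.interPreorder TyC.interPreorder l σ κ := by
  constructor
  · intro h
    have := h.coversAll (σ, κ) (List.mem_singleton_self _) hκ
    rwa [TyT.arrows_interT_map_arrow] at this
  · rintro ⟨J, hJ, hJl, hσ, hκ'⟩
    exact .trans (big_le_big_of_subset (P := TyT.interPreorder) (List.map_subset _ hJl))
      (.trans (subT_interT_map_arrow J hJ) (.arrowMono hσ hκ'))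

/-- beta-soundness of the subtyping preorders. -/
theorem beta_soundness :
    (∀ (n : ℕ) (ds : Fin n → TyD) (ts : Fin n → TyT) (δ : TyD) (τ : TyT),
      ¬ SubT .omega τ →
      (SubD (InterD (List.ofFn fun i => TyD.arrow (ds i) (ts i))) (.arrow δ τ) ↔
        ∃ J : List (Fin n), J ≠ [] ∧
          SubD δ (InterD (J.map ds)) ∧ SubT (InterT (J.map ts)) τ)) ∧
    (∀ (n : ℕ) (ss : Fin n → TyS) (ks : Fin n → TyC) (σ : TyS) (κ : TyC),
      ¬ SubC .omega κ →
      (SubT (InterT (List.ofFn fun i => TyT.arrow (ss i) (ks i))) (.arrow σ κ) ↔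
        ∃ J : List (Fin n), J ≠ [] ∧
          SubS σ (InterS (J.map ss)) ∧ SubC (InterC (J.map ks)) κ)) := by
  refine ⟨fun n ds ts δ τ hτ => ?_, fun n ss ks σ κ hκ => ?_⟩
  · have h := (subD_interD_map_arrow_iff (l := List.ofFn fun i => (ds i, ts i)) hτ).trans
      (covers_ofFn_iff _ δ τ)
    rwa [List.map_ofFn] at h
  · have h := (subT_interT_map_arrow_iff (l := List.ofFn fun i => (ss i, ks i)) hκ).trans
      (covers_ofFn_iff _ σ κ)
    rwa [List.map_ofFn] at h
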